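/- arXiv:0710.1972 — 2 statements merged into one kernel-verified Lean document; each statement's English description precedes it below -/
import Mathlib

section
/- For every n ≥ 3, every q ∈ ℂ with q ≠ 0, and every 1 ≤ i < n − 1, the operators on V_{n,q} satisfy the braid relation T_i T_{i+1} T_i = T_{i+1} T_i T_{i+1} in End_ℂ(V_{n,q}). -/
open Equiv

/-- The set of involutions in `Sₙ` (elements `w` with `w² = id`). -/
abbrev SymInv (n : ℕ) : Type := {w : Equiv.Perm (Fin n) // w * w = 1}

/-- `V_{n,q}`: the complex vector space with basis `{I_w : w an involution in Sₙ}`. -/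
abbrev Vn (n : ℕ) : Type := SymInv n →₀ ℂ

/-- Conjugation of an involution by a permutation: `π w π⁻¹`. -/
def conjInv (n : ℕ) (π : Equiv.Perm (Fin n)) (w : SymInv n) : SymInv n :=
  ⟨π * w.1 * π⁻¹, by
    have h : π * w.1 * π⁻¹ * (π * w.1 * π⁻¹) = π * (w.1 * w.1) * π⁻¹ := by group
    rw [h, w.2, mul_one, mul_inv_cancel]⟩

/-- The operator `T_i` on `V_{n,q}`.  Here indices are 0-based: the parameter `i`
(with `i + 1 < n`) corresponds to the pair of points `i, i+1` of `{0, …, n−1}`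
(that is, to the 1-based index `i+1` of the paper), and `s_i` is the transposition
swapping them.  On a basis vector `I_w` it acts by:
`q I_w` if `i, i+1 ∉ supp(w)`; `−I_w` if `i, i+1 ∈ supp(w)`;
`I_{s_i w s_i}` if `i ∈ supp(w)`, `i+1 ∉ supp(w)`;
`q I_{s_i w s_i} + (q−1) I_w` if `i ∉ supp(w)`, `i+1 ∈ supp(w)`. -/
noncomputable def TOp (n : ℕ) (q : ℂ) (i : ℕ) (hi : i + 1 < n) : Vn n →ₗ[ℂ] Vn n :=
  Finsupp.lift (Vn n) ℂ (SymInv n) (fun w =>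
    letI a : Fin n := ⟨i, Nat.lt_of_succ_lt hi⟩
    letI b : Fin n := ⟨i + 1, hi⟩
    letI s : Equiv.Perm (Fin n) := Equiv.swap a b
    if w.1 a = a then
      (if w.1 b = b then q • Finsupp.single w (1 : ℂ)
       else q • Finsupp.single (conjInv n s w) (1 : ℂ) + (q - 1) • Finsupp.single w (1 : ℂ))
    else
      (if w.1 b = b then Finsupp.single (conjInv n s w) (1 : ℂ)
       else - Finsupp.single w (1 : ℂ)))

/-!
`T_i` depends only on the transposition `(i i+1)`, and the braid relation already holds for the
analogous operators `T_{a,b}` attached to any three distinct points `a, b, c`. On a basis vector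
`I_w` it is a case analysis on which of `a, b, c` are fixed by `w`: the involutions indexing the
resulting vectors are conjugates of `w` by words in `(a b)` and `(b c)`, and they match up by
`(a b)² = (b c)² = 1` and `(a b)(b c)(a b) = (b c)(a b)(b c)`.
-/

section conjInv

variable {n : ℕ}

lemma conjInv_conjInv (π σ : Perm (Fin n)) (w : SymInv n) :
    conjInv n π (conjInv n σ w) = conjInv n (π * σ) w := by
  apply Subtype.ext
  simp [conjInv, mul_assoc]

lemma conjInv_swap_conjInv_swap (a b : Fin n) (w : SymInv n) :
    conjInv n (swap a b) (conjInv n (swap a b) w) = w := by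
  rw [conjInv_conjInv, swap_mul_self]
  exact Subtype.ext (by simp [conjInv])

lemma conjInv_swap_braid {a b c : Fin n} (hab : a ≠ b) (hbc : b ≠ c) (hac : a ≠ c)
    (w : SymInv n) :
    conjInv n (swap a b) (conjInv n (swap b c) (conjInv n (swap a b) w)) =
      conjInv n (swap b c) (conjInv n (swap a b) (conjInv n (swap b c) w)) := by
  have lhs : swap a b * swap b c * swap a b = swap a c := by
    rw [swap_comm a b, swap_comm b c]
    exact swap_mul_swap_mul_swap hbc.symm hac.symm
  have rhs : swap b c * swap a b * swap b c = swap a c := by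
    rw [swap_mul_swap_mul_swap hab hac, swap_comm]
  simp only [conjInv_conjInv, ← mul_assoc, lhs, rhs]

lemma conjInv_swap_apply_left_eq_iff (a b : Fin n) (w : SymInv n) :
    (conjInv n (swap a b) w).1 a = a ↔ w.1 b = b := by
  simp only [conjInv, Perm.mul_apply, swap_inv, swap_apply_left, swap_apply_eq_iff]

lemma conjInv_swap_apply_right_eq_iff (a b : Fin n) (w : SymInv n) :
    (conjInv n (swap a b) w).1 b = b ↔ w.1 a = a := by
  simp only [conjInv, Perm.mul_apply, swap_inv, swap_apply_right, swap_apply_eq_iff]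

lemma conjInv_swap_apply_of_ne_eq_iff {a b x : Fin n} (ha : x ≠ a) (hb : x ≠ b)
    (w : SymInv n) : (conjInv n (swap a b) w).1 x = x ↔ w.1 x = x := by
  simp only [conjInv, Perm.mul_apply, swap_inv, swap_apply_of_ne_of_ne ha hb, swap_apply_eq_iff]

end conjInv

noncomputable def TOpSwap (n : ℕ) (q : ℂ) (a b : Fin n) : Vn n →ₗ[ℂ] Vn n :=
  Finsupp.lift (Vn n) ℂ (SymInv n) fun w =>
    if w.1 a = a then
      (if w.1 b = b then q • Finsupp.single w 1
       else q • Finsupp.single (conjInv n (swap a b) w) 1 + (q - 1) • Finsupp.single w 1)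
    else
      (if w.1 b = b then Finsupp.single (conjInv n (swap a b) w) 1
       else - Finsupp.single w 1)

lemma TOp_eq_TOpSwap (n : ℕ) (q : ℂ) (i : ℕ) (hi : i + 1 < n) :
    TOp n q i hi = TOpSwap n q ⟨i, by omega⟩ ⟨i + 1, hi⟩ := rfl

section TOpSwap

variable {n : ℕ} (q : ℂ)

lemma TOpSwap_single (a b : Fin n) (w : SymInv n) :
    TOpSwap n q a b (Finsupp.single w 1) =
      if w.1 a = a then
        (if w.1 b = b then q • Finsupp.single w 1
         else q • Finsupp.single (conjInv n (swap a b) w) 1 + (q - 1) • Finsupp.single w 1)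
      else
        (if w.1 b = b then Finsupp.single (conjInv n (swap a b) w) 1
         else - Finsupp.single w 1) := by
  rw [TOpSwap, Finsupp.lift_apply, Finsupp.sum_single_index (by simp), one_smul]

lemma TOpSwap_braid_single {a b c : Fin n} (hab : a ≠ b) (hbc : b ≠ c) (hac : a ≠ c)
    (w : SymInv n) :
    TOpSwap n q a b (TOpSwap n q b c (TOpSwap n q a b (Finsupp.single w 1))) =
      TOpSwap n q b c (TOpSwap n q a b (TOpSwap n q b c (Finsupp.single w 1))) := by
  by_cases hA : w.1 a = a <;> by_cases hB : w.1 b = b <;> by_cases hC : w.1 c = c <;>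
    simp only [TOpSwap_single, hA, hB, hC, if_true, if_false,
      conjInv_swap_apply_left_eq_iff, conjInv_swap_apply_right_eq_iff,
      conjInv_swap_apply_of_ne_eq_iff hac.symm hbc.symm, conjInv_swap_apply_of_ne_eq_iff hab hac,
      conjInv_swap_conjInv_swap, conjInv_swap_braid hab hbc hac,
      map_add, map_smul, map_neg, smul_add, smul_smul, smul_neg, neg_neg, neg_add] <;>
    module

theorem TOpSwap_braid {a b c : Fin n} (hab : a ≠ b) (hbc : b ≠ c) (hac : a ≠ c) :
    (TOpSwap n q a b : Module.End ℂ (Vn n)) * TOpSwap n q b c * TOpSwap n q a b =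
      (TOpSwap n q b c : Module.End ℂ (Vn n)) * TOpSwap n q a b * TOpSwap n q b c :=
  Finsupp.lhom_ext' fun w => LinearMap.ext_ring (TOpSwap_braid_single q hab hbc hac w)

end TOpSwap

/-- The braid relation `T_i T_{i+1} T_i = T_{i+1} T_i T_{i+1}`.  In the 0-based indexing
used here, the condition `1 ≤ i < n − 1` of the paper reads `i + 2 < n`. -/
theorem TOp_braid (n : ℕ) (q : ℂ) (i : ℕ) (hi : i + 2 < n) :
    (TOp n q i (by omega) : Module.End ℂ (Vn n)) * TOp n q (i + 1) hi * TOp n q i (by omega) =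
      (TOp n q (i + 1) hi : Module.End ℂ (Vn n)) * TOp n q i (by omega) *
        TOp n q (i + 1) hi := by
  simp only [TOp_eq_TOpSwap]
  exact TOpSwap_braid q (Fin.ne_of_val_ne (by dsimp only; omega))
    (Fin.ne_of_val_ne (by dsimp only; omega)) (Fin.ne_of_val_ne (by dsimp only; omega))
end

section
/- For every n ≥ 2, every q ∈ ℂ with q ≠ 0, and all indices 1 ≤ i, j ≤ n − 1 with |i − j| > 1, the operators T_i and T_j on V (the span of basis vectors indexed by involutions in ISₙ) commute: T_i T_j = T_j T_i in End_ℂ(V). -/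
/-!
`T_i` sends `I_w` to `α(w) I_w + β(w) I_{s_i w s_i}`, where the coefficients `α, β` only see
how `w` treats the two points `i, i+1`. Conjugating by a permutation fixing those points does
not change that, and for `|i - j| > 1` the transpositions `s_i` and `s_j` are disjoint, so each
of `T_i, T_j` leaves the coefficients of the other unchanged while the two conjugations commute.
Operators of this shape then commute by a direct computation on basis vectors.
-/

open Equiv

/-- The symmetric inverse semigroup `ISₙ`: partial injective maps of `{0, …, n−1}`
(modelled as partial equivalences `Fin n ≃. Fin n`), under composition of partial
maps: `(x * y)(a) = x(y(a))`. -/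
abbrev ISn (n : ℕ) : Type := PEquiv (Fin n) (Fin n)

noncomputable instance ISnMonoid (n : ℕ) : Monoid (ISn n) where
  one := PEquiv.refl (Fin n)
  mul x y := y.trans x
  mul_assoc x y z := (PEquiv.trans_assoc z y x).symm
  one_mul x := PEquiv.trans_refl x
  mul_one x := PEquiv.refl_trans x

@[simp] theorem ISn.mul_def {n : ℕ} (x y : ISn n) : x * y = y.trans x := rfl
@[simp] theorem ISn.one_def {n : ℕ} : (1 : ISn n) = PEquiv.refl (Fin n) := rfl

/-- Involutions in `ISₙ`: elements mapping their domain bijectively to itself with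
`w(w(a)) = a` for all `a` in the domain; equivalently, `w.symm = w`. -/
abbrev ISInv (n : ℕ) : Type := {w : ISn n // w.symm = w}

/-- `V`: the complex vector space with basis `{I_w : w an involution in ISₙ}`. -/
abbrev VIS (n : ℕ) : Type := ISInv n →₀ ℂ

/-- Conjugation `x w x⁻¹` of an involution `w ∈ ISₙ` by an element `x ∈ ISₙ`
(as a partial map, `a ↦ x(w(x⁻¹(a)))`; when `dom(w) ⊆ dom(x)` this is the involution
with domain `x(dom(w))` sending `x(a) ↦ x(w(a))` for `a ∈ dom(w)`). -/
def conjIS {n : ℕ} (x : ISn n) (w : ISInv n) : ISInv n :=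
  ⟨(x.symm.trans w.1).trans x, by
    rw [PEquiv.symm_trans_rev, PEquiv.symm_trans_rev, PEquiv.symm_symm, w.2,
      PEquiv.trans_assoc]⟩

/-- Conjugation `π w π⁻¹` of an involution `w ∈ ISₙ` by a permutation `π ∈ Sₙ`:
the involution with domain `π(dom(w))` sending `π(a) ↦ π(w(a))` for `a ∈ dom(w)`. -/
def conjPermIS {n : ℕ} (π : Equiv.Perm (Fin n)) (w : ISInv n) : ISInv n :=
  conjIS π.toPEquiv w

/-- The operator `T_i` on `V`.  Indices are 0-based: the parameter `i` (with
`i + 1 < n`) corresponds to the pair of points `i, i+1` of `{0, …, n−1}` (that is,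
to the 1-based index `i+1` of the paper), and `s_i` is the transposition swapping
them.  On a basis vector `I_w`:
if `i, i+1 ∈ dom(w)` then `T_i I_w` is `q I_w` if `i, i+1 ∉ supp(w)`; `−I_w` if
`i, i+1 ∈ supp(w)`; `I_{s_i w s_i}` if `i ∈ supp(w)`, `i+1 ∉ supp(w)`;
`q I_{s_i w s_i} + (q−1) I_w` if `i ∉ supp(w)`, `i+1 ∈ supp(w)`.
If `i, i+1 ∉ dom(w)` then `T_i I_w = q I_w`.  If `i ∈ dom(w)`, `i+1 ∉ dom(w)` then
`T_i I_w = I_{s_i w s_i}`.  If `i ∉ dom(w)`, `i+1 ∈ dom(w)` then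
`T_i I_w = q I_{s_i w s_i} + (q−1) I_w`. -/
noncomputable def TIS (n : ℕ) (q : ℂ) (i : ℕ) (hi : i + 1 < n) : VIS n →ₗ[ℂ] VIS n :=
  Finsupp.lift (VIS n) ℂ (ISInv n) (fun w =>
    letI a : Fin n := ⟨i, Nat.lt_of_succ_lt hi⟩
    letI b : Fin n := ⟨i + 1, hi⟩
    letI s : Equiv.Perm (Fin n) := Equiv.swap a b
    if (w.1 a).isSome then
      if (w.1 b).isSome then
        -- both `i` and `i+1` lie in `dom(w)`
        if w.1 a = some a then
          if w.1 b = some b then q • Finsupp.single w (1 : ℂ)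
          else q • Finsupp.single (conjPermIS s w) (1 : ℂ) +
            (q - 1) • Finsupp.single w (1 : ℂ)
        else
          if w.1 b = some b then Finsupp.single (conjPermIS s w) (1 : ℂ)
          else - Finsupp.single w (1 : ℂ)
      else Finsupp.single (conjPermIS s w) (1 : ℂ)
    else
      if (w.1 b).isSome then
        q • Finsupp.single (conjPermIS s w) (1 : ℂ) + (q - 1) • Finsupp.single w (1 : ℂ)
      else q • Finsupp.single w (1 : ℂ))

/-- The operator `P_i` on `V`.  Indices are 0-based: the parameter `i` (with `i < n`)
corresponds to the 1-based index `i+1` of the paper, so that the paper's condition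
`dom(w) ⊆ {i+1, …, n}` becomes: every `a ∈ dom(w)` satisfies `i < a`.
On a basis vector: `P_i I_w = I_w` if `dom(w) ⊆ {i+1, …, n}`, and `P_i I_w = 0`
otherwise. -/
noncomputable def PIS (n : ℕ) (i : ℕ) : VIS n →ₗ[ℂ] VIS n :=
  Finsupp.lift (VIS n) ℂ (ISInv n) (fun w =>
    if ∀ a : Fin n, (w.1 a).isSome → i < (a : ℕ) then Finsupp.single w (1 : ℂ) else 0)

/-- The linear map `C_π : V → V` with `C_π(I_w) = I_{π w π⁻¹}`. -/
noncomputable def CIS (n : ℕ) (π : Equiv.Perm (Fin n)) : VIS n →ₗ[ℂ] VIS n :=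
  Finsupp.lift (VIS n) ℂ (ISInv n) (fun w => Finsupp.single (conjPermIS π w) (1 : ℂ))

section TwistedDiag

variable {R X : Type*} [CommSemiring R]

noncomputable def twistedDiag (α β : X → R) (g : X → X) : Module.End R (X →₀ R) :=
  Finsupp.lift (X →₀ R) R X fun x => α x • Finsupp.single x 1 + β x • Finsupp.single (g x) 1

theorem twistedDiag_single (α β : X → R) (g : X → X) (x : X) :
    twistedDiag α β g (Finsupp.single x 1) =
      α x • Finsupp.single x 1 + β x • Finsupp.single (g x) 1 := by
  simp only [twistedDiag, Finsupp.lift_apply, Finsupp.sum_single_index, zero_smul, one_smul]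

theorem twistedDiag_mul_comm {α β α' β' : X → R} {g g' : X → X}
    (hg : ∀ x, g (g' x) = g' (g x))
    (hα : ∀ x, α (g' x) = α x) (hβ : ∀ x, β (g' x) = β x)
    (hα' : ∀ x, α' (g x) = α' x) (hβ' : ∀ x, β' (g x) = β' x) :
    twistedDiag α β g * twistedDiag α' β' g' = twistedDiag α' β' g' * twistedDiag α β g := by
  refine Finsupp.basisSingleOne.ext fun x => ?_
  simp only [Finsupp.coe_basisSingleOne, Module.End.mul_apply, twistedDiag_single, map_add,
    map_smul, hα, hβ, hα', hβ', hg]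
  module

end TwistedDiag

theorem conjPermIS_apply {n : ℕ} (π : Equiv.Perm (Fin n)) (w : ISInv n) (x : Fin n) :
    (conjPermIS π w).1 x = (w.1 (π.symm x)).map π := by
  show ((π.toPEquiv.symm x).bind w.1).bind π.toPEquiv = _
  rw [← Equiv.toPEquiv_symm, Equiv.toPEquiv_apply, Option.bind_some]
  cases w.1 (π.symm x) <;> simp [Equiv.toPEquiv_apply]

theorem conjPermIS_mul {n : ℕ} (π σ : Equiv.Perm (Fin n)) (w : ISInv n) :
    conjPermIS (π * σ) w = conjPermIS π (conjPermIS σ w) := by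
  refine Subtype.ext (PEquiv.ext fun x => ?_)
  simp only [conjPermIS_apply, Option.map_map, Equiv.Perm.mul_def, Equiv.symm_trans_apply]
  rfl

theorem conjPermIS_comm {n : ℕ} {π σ : Equiv.Perm (Fin n)} (h : Commute π σ) (w : ISInv n) :
    conjPermIS π (conjPermIS σ w) = conjPermIS σ (conjPermIS π w) := by
  rw [← conjPermIS_mul, h.eq, conjPermIS_mul]

section FixedPoint

variable {n : ℕ} {π : Equiv.Perm (Fin n)} {x : Fin n}

theorem isSome_conjPermIS_apply (hx : π x = x) (w : ISInv n) :
    ((conjPermIS π w).1 x).isSome = (w.1 x).isSome := by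
  simp [conjPermIS_apply, π.symm_apply_eq.mpr hx.symm]

theorem conjPermIS_apply_eq_self_iff (hx : π x = x) (w : ISInv n) :
    (conjPermIS π w).1 x = some x ↔ w.1 x = some x := by
  rw [conjPermIS_apply, π.symm_apply_eq.mpr hx.symm, Option.map_eq_some_iff]
  constructor
  · rintro ⟨y, hy, hyx⟩
    obtain rfl := π.injective (hyx.trans hx.symm)
    exact hy
  · exact fun h => ⟨x, h, hx⟩

end FixedPoint

section Coefficients

variable {n : ℕ} (q : ℂ) (a b : Fin n)

noncomputable def diagCoeff (w : ISInv n) : ℂ :=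
  if (w.1 a).isSome then
    if (w.1 b).isSome then
      if w.1 a = some a then (if w.1 b = some b then q else q - 1)
      else (if w.1 b = some b then 0 else -1)
    else 0
  else if (w.1 b).isSome then q - 1 else q

noncomputable def swapCoeff (w : ISInv n) : ℂ :=
  if (w.1 a).isSome then
    if (w.1 b).isSome then
      if w.1 a = some a then (if w.1 b = some b then 0 else q)
      else (if w.1 b = some b then 1 else 0)
    else 1
  else if (w.1 b).isSome then q else 0

variable {q a b} {π : Equiv.Perm (Fin n)}

theorem diagCoeff_conjPermIS (ha : π a = a) (hb : π b = b) (w : ISInv n) :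
    diagCoeff q a b (conjPermIS π w) = diagCoeff q a b w := by
  simp only [diagCoeff, isSome_conjPermIS_apply ha, isSome_conjPermIS_apply hb,
    conjPermIS_apply_eq_self_iff ha, conjPermIS_apply_eq_self_iff hb]

theorem swapCoeff_conjPermIS (ha : π a = a) (hb : π b = b) (w : ISInv n) :
    swapCoeff q a b (conjPermIS π w) = swapCoeff q a b w := by
  simp only [swapCoeff, isSome_conjPermIS_apply ha, isSome_conjPermIS_apply hb,
    conjPermIS_apply_eq_self_iff ha, conjPermIS_apply_eq_self_iff hb]

end Coefficients

theorem TIS_eq_twistedDiag (n : ℕ) (q : ℂ) (i : ℕ) (hi : i + 1 < n) :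
    TIS n q i hi =
      twistedDiag (diagCoeff q ⟨i, by omega⟩ ⟨i + 1, hi⟩) (swapCoeff q ⟨i, by omega⟩ ⟨i + 1, hi⟩)
        (conjPermIS (Equiv.swap ⟨i, by omega⟩ ⟨i + 1, hi⟩)) := by
  refine Finsupp.basisSingleOne.ext fun w => ?_
  simp only [Finsupp.coe_basisSingleOne, twistedDiag_single, TIS, Finsupp.lift_apply,
    Finsupp.sum_single_index, zero_smul, one_smul, diagCoeff, swapCoeff]
  split_ifs <;> simp <;> module

theorem TIS_mul_comm_of_lt (n : ℕ) (q : ℂ) (i j : ℕ) (hi : i + 1 < n) (hj : j + 1 < n)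
    (hij : i + 1 < j) :
    (TIS n q i hi : Module.End ℂ (VIS n)) * TIS n q j hj =
      (TIS n q j hj : Module.End ℂ (VIS n)) * TIS n q i hi := by
  rw [TIS_eq_twistedDiag, TIS_eq_twistedDiag]
  set a : Fin n := ⟨i, by omega⟩
  set b : Fin n := ⟨i + 1, hi⟩
  set c : Fin n := ⟨j, by omega⟩
  set d : Fin n := ⟨j + 1, hj⟩
  have hac : a ≠ c := Fin.ne_of_val_ne (by simp [a, c]; omega)
  have had : a ≠ d := Fin.ne_of_val_ne (by simp [a, d]; omega)
  have hbc : b ≠ c := Fin.ne_of_val_ne (by simp [b, c]; omega)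
  have hbd : b ≠ d := Fin.ne_of_val_ne (by simp [b, d]; omega)
  have hab : a ≠ b := Fin.ne_of_val_ne (by simp [a, b])
  have hcd : c ≠ d := Fin.ne_of_val_ne (by simp [c, d])
  have hdisj : (Equiv.swap a b).Disjoint (Equiv.swap c d) :=
    Equiv.Perm.disjoint_swap_swap (by simp [hab, hac, had, hbc, hbd, hcd])
  have ha : Equiv.swap c d a = a := swap_apply_of_ne_of_ne hac had
  have hb : Equiv.swap c d b = b := swap_apply_of_ne_of_ne hbc hbd
  have hc : Equiv.swap a b c = c := swap_apply_of_ne_of_ne hac.symm hbc.symm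
  have hd : Equiv.swap a b d = d := swap_apply_of_ne_of_ne had.symm hbd.symm
  exact twistedDiag_mul_comm (conjPermIS_comm hdisj.commute)
    (diagCoeff_conjPermIS ha hb) (swapCoeff_conjPermIS ha hb)
    (diagCoeff_conjPermIS hc hd) (swapCoeff_conjPermIS hc hd)

theorem TIS_comm_general (n : ℕ) (q : ℂ) (i j : ℕ)
    (hi : i + 1 < n) (hj : j + 1 < n) (hij : i + 1 < j ∨ j + 1 < i) :
    (TIS n q i hi : Module.End ℂ (VIS n)) * TIS n q j hj =
      (TIS n q j hj : Module.End ℂ (VIS n)) * TIS n q i hi := by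
  rcases hij with h | h
  · exact TIS_mul_comm_of_lt n q i j hi hj h
  · exact (TIS_mul_comm_of_lt n q j i hj hi h).symm

/-- Distant operators `T_i` and `T_j` on `V` commute (`|i − j| > 1`). -/
theorem TIS_comm (n : ℕ) (hn : 2 ≤ n) (q : ℂ) (hq : q ≠ 0) (i j : ℕ)
    (hi : i + 1 < n) (hj : j + 1 < n) (hij : i + 1 < j ∨ j + 1 < i) :
    (TIS n q i hi : Module.End ℂ (VIS n)) * TIS n q j hj =
      (TIS n q j hj : Module.End ℂ (VIS n)) * TIS n q i hi :=
  TIS_comm_general n q i j hi hj hij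
end
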